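/- arXiv:2408.15981 — 5 statements merged into one kernel-verified Lean document; each statement's English description precedes it below -/
import Mathlib

section
/- Let p_τ(x,y) be a transition density on X ⊆ ℝ^D with prior density ρ₀ and marginal ρ₁(y) = ∫ ρ₀(x) p_τ(x,y) dx, and define the backward transition density p_{-τ}(y,x) = ρ₀(x) p_τ(x,y) / ρ₁(y). If there exist functions p_τ^D : X × Z → ℝ⁺ and p_local : Z × X → ℝ⁺ such that p_τ(x,y) = p_τ^D(x, r(y)) · p_local(r(y), y) for all x,y (decomposability), then there exists a function p_{-τ}^D : Z × X → ℝ⁺ such that p_{-τ}(y,x) = p_{-τ}^D(r(y), x) for all x,y. -/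
/-!
By Bayes' rule the backward density is `ρ₀(x) p_τ(x,y) / ∫ ρ₀(x') p_τ(x',y) dx'`. Under
decomposability the factor `p_local(r(y), y)` does not depend on `x`, so it comes out of the
integral in the denominator and cancels against the numerator, leaving
`ρ₀(x) p_τ^D(x, r(y)) / ∫ ρ₀(x') p_τ^D(x', r(y)) dx'`, which sees `y` only through `r(y)`.
-/

open MeasureTheory

section

variable {α β : Type*} [MeasurableSpace α] {μ : Measure α} {X : Set α}

/-- The paper's `p_{-τ}^D(z, ·)`, for a decomposition `p_τ(x, y) = pD(x, r y) · p_local(r y, y)`. -/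
noncomputable def reducedBackwardDensity (μ : Measure α) (X : Set α) (ρ₀ : α → ℝ)
    (pD : α → β → ℝ) (z : β) : α → ℝ :=
  X.indicator fun x => ρ₀ x * pD x z / ∫ x' in X, ρ₀ x' * pD x' z ∂μ

theorem reducedBackwardDensity_nonneg (hX : MeasurableSet X) {ρ₀ : α → ℝ} {pD : α → β → ℝ}
    {z : β} (hρ₀ : ∀ x ∈ X, 0 ≤ ρ₀ x) (hpD : ∀ x ∈ X, 0 ≤ pD x z) (x : α) :
    0 ≤ reducedBackwardDensity μ X ρ₀ pD z x := by
  have hI : 0 ≤ ∫ x' in X, ρ₀ x' * pD x' z ∂μ :=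
    setIntegral_nonneg hX fun x' hx' => mul_nonneg (hρ₀ x' hx') (hpD x' hx')
  exact Set.indicator_nonneg (fun x hx => div_nonneg (mul_nonneg (hρ₀ x hx) (hpD x hx)) hI) x

theorem setIntegral_mul_eq_mul_const (hX : MeasurableSet X) {ρ p f : α → ℝ} {c : ℝ}
    (h : ∀ x ∈ X, p x = f x * c) :
    ∫ x in X, ρ x * p x ∂μ = (∫ x in X, ρ x * f x ∂μ) * c := by
  rw [← integral_mul_const]
  exact setIntegral_congr_fun hX fun x hx => by simp only [h x hx, mul_assoc]

/-- Bayes' rule is blind to a factor of the likelihood that does not depend on `x`. -/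
theorem bayes_eq_reducedBackwardDensity (hX : MeasurableSet X) {ρ₀ p : α → ℝ}
    {pD : α → β → ℝ} {z : β} {c : ℝ} (h : ∀ x ∈ X, p x = pD x z * c)
    (hne : ∫ x in X, ρ₀ x * p x ∂μ ≠ 0) {x : α} (hx : x ∈ X) :
    ρ₀ x * p x / ∫ x' in X, ρ₀ x' * p x' ∂μ = reducedBackwardDensity μ X ρ₀ pD z x := by
  rw [setIntegral_mul_eq_mul_const hX h] at hne ⊢
  rw [reducedBackwardDensity, Set.indicator_of_mem hx, h x hx, ← mul_assoc,
    mul_div_mul_right _ _ (right_ne_zero_of_mul hne)]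

end

theorem decomposability_implies_backward_factorization_general
    {D d : ℕ}
    (X : Set (EuclideanSpace ℝ (Fin D))) (hX : MeasurableSet X)
    (r : EuclideanSpace ℝ (Fin D) → EuclideanSpace ℝ (Fin d))
    (pτ : EuclideanSpace ℝ (Fin D) → EuclideanSpace ℝ (Fin D) → ℝ)
    (ρ₀ : EuclideanSpace ℝ (Fin D) → ℝ)
    (hρ₀_pos : ∀ x ∈ X, 0 < ρ₀ x)
    (ρ₁ : EuclideanSpace ℝ (Fin D) → ℝ)
    (hρ₁_def : ∀ y ∈ X, ρ₁ y = ∫ x in X, ρ₀ x * pτ x y)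
    (hρ₁_pos : ∀ y ∈ X, 0 < ρ₁ y)
    (pmτ : EuclideanSpace ℝ (Fin D) → EuclideanSpace ℝ (Fin D) → ℝ)
    (hpmτ_def : ∀ x ∈ X, ∀ y ∈ X, pmτ y x = ρ₀ x * pτ x y / ρ₁ y)
    -- decomposability
    (pτD : EuclideanSpace ℝ (Fin D) → EuclideanSpace ℝ (Fin d) → ℝ)
    (plocal : EuclideanSpace ℝ (Fin d) → EuclideanSpace ℝ (Fin D) → ℝ)
    (hpτD_nonneg : ∀ x z, 0 ≤ pτD x z)
    (hdecomp : ∀ x ∈ X, ∀ y ∈ X, pτ x y = pτD x (r y) * plocal (r y) y) :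
    ∃ pmτD : EuclideanSpace ℝ (Fin d) → EuclideanSpace ℝ (Fin D) → ℝ,
      (∀ z x, 0 ≤ pmτD z x) ∧
      ∀ x ∈ X, ∀ y ∈ X, pmτ y x = pmτD (r y) x := by
  refine ⟨reducedBackwardDensity volume X ρ₀ pτD,
    fun z => reducedBackwardDensity_nonneg hX (fun x hx => (hρ₀_pos x hx).le)
      (fun x _ => hpτD_nonneg x z),
    fun x hx y hy => ?_⟩
  have hρ₁_ne : ∫ x' in X, ρ₀ x' * pτ x' y ≠ 0 := hρ₁_def y hy ▸ (hρ₁_pos y hy).ne'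
  rw [hpmτ_def x hx y hy, hρ₁_def y hy]
  exact bayes_eq_reducedBackwardDensity hX (fun x' hx' => hdecomp x' hx' y hy) hρ₁_ne hx

/-- Decomposability implies the backward transition density factors
through the reaction coordinate. -/
theorem decomposability_implies_backward_factorization
    {D d : ℕ}
    (X : Set (EuclideanSpace ℝ (Fin D))) (hX : MeasurableSet X)
    (r : EuclideanSpace ℝ (Fin D) → EuclideanSpace ℝ (Fin d)) (hr : Measurable r)
    (pτ : EuclideanSpace ℝ (Fin D) → EuclideanSpace ℝ (Fin D) → ℝ)
    (hpτ_nonneg : ∀ x ∈ X, ∀ y ∈ X, 0 ≤ pτ x y)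
    (hpτ_norm : ∀ x ∈ X, ∫ y in X, pτ x y = 1)
    (ρ₀ : EuclideanSpace ℝ (Fin D) → ℝ)
    (hρ₀_pos : ∀ x ∈ X, 0 < ρ₀ x)
    (hρ₀_norm : ∫ x in X, ρ₀ x = 1)
    (ρ₁ : EuclideanSpace ℝ (Fin D) → ℝ)
    (hρ₁_def : ∀ y ∈ X, ρ₁ y = ∫ x in X, ρ₀ x * pτ x y)
    (hρ₁_pos : ∀ y ∈ X, 0 < ρ₁ y)
    (pmτ : EuclideanSpace ℝ (Fin D) → EuclideanSpace ℝ (Fin D) → ℝ)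
    (hpmτ_def : ∀ x ∈ X, ∀ y ∈ X, pmτ y x = ρ₀ x * pτ x y / ρ₁ y)
    -- decomposability
    (pτD : EuclideanSpace ℝ (Fin D) → EuclideanSpace ℝ (Fin d) → ℝ)
    (plocal : EuclideanSpace ℝ (Fin d) → EuclideanSpace ℝ (Fin D) → ℝ)
    (hpτD_nonneg : ∀ x z, 0 ≤ pτD x z)
    (hplocal_nonneg : ∀ z y, 0 ≤ plocal z y)
    (hdecomp : ∀ x ∈ X, ∀ y ∈ X, pτ x y = pτD x (r y) * plocal (r y) y) :
    ∃ pmτD : EuclideanSpace ℝ (Fin d) → EuclideanSpace ℝ (Fin D) → ℝ,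
      (∀ z x, 0 ≤ pmτD z x) ∧
      ∀ x ∈ X, ∀ y ∈ X, pmτ y x = pmτD (r y) x :=
  decomposability_implies_backward_factorization_general X hX r pτ ρ₀ hρ₀_pos ρ₁ hρ₁_def hρ₁_pos pmτ
    hpmτ_def pτD plocal hpτD_nonneg hdecomp
end

section
/- With the same setup, the converse holds: if there exists p_{-τ}^D : Z × X → ℝ⁺ with p_{-τ}(y,x) = p_{-τ}^D(r(y), x) for all x,y, then p_τ(x,y) factors as p_τ(x,y) = p_τ^D(x, r(y)) · ρ₁(y) for some function p_τ^D : X × Z → ℝ⁺ with an appropriate normalization, i.e., the system is decomposable with respect to r. -/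
lemma eq_div_mul_of_eq_mul_div {K : Type*} [Field K] {a b c q : K} (ha : a ≠ 0)
    (hc : c ≠ 0) (h : q = a * b / c) : b = q / a * c := by
  rw [h]
  field_simp

theorem backward_factorization_implies_decomposability_general
    {D d : ℕ}
    (X : Set (EuclideanSpace ℝ (Fin D)))
    (r : EuclideanSpace ℝ (Fin D) → EuclideanSpace ℝ (Fin d))
    (pτ : EuclideanSpace ℝ (Fin D) → EuclideanSpace ℝ (Fin D) → ℝ)
    (ρ₀ : EuclideanSpace ℝ (Fin D) → ℝ)
    (hρ₀_pos : ∀ x ∈ X, 0 < ρ₀ x)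
    (ρ₁ : EuclideanSpace ℝ (Fin D) → ℝ)
    (hρ₁_pos : ∀ y ∈ X, 0 < ρ₁ y)
    (pmτ : EuclideanSpace ℝ (Fin D) → EuclideanSpace ℝ (Fin D) → ℝ)
    (hpmτ_def : ∀ x ∈ X, ∀ y ∈ X, pmτ y x = ρ₀ x * pτ x y / ρ₁ y)
    -- the backward density factors through the reaction coordinate
    (pmτD : EuclideanSpace ℝ (Fin d) → EuclideanSpace ℝ (Fin D) → ℝ)
    (hpmτD_nonneg : ∀ z x, 0 ≤ pmτD z x)
    (hfact : ∀ x ∈ X, ∀ y ∈ X, pmτ y x = pmτD (r y) x) :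
    ∃ pτD : EuclideanSpace ℝ (Fin D) → EuclideanSpace ℝ (Fin d) → ℝ,
      (∀ x z, 0 ≤ pτD x z) ∧
      ∀ x ∈ X, ∀ y ∈ X, pτ x y = pτD x (r y) * ρ₁ y := by
  -- `|ρ₀ x|` rather than `ρ₀ x` keeps the witness nonnegative off `X`, where `ρ₀` is unconstrained.
  refine ⟨fun x z => pmτD z x / |ρ₀ x|, fun x z => div_nonneg (hpmτD_nonneg z x) (abs_nonneg _),
    fun x hx y hy => ?_⟩
  show pτ x y = pmτD (r y) x / |ρ₀ x| * ρ₁ y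
  rw [abs_of_pos (hρ₀_pos x hx), ← hfact x hx y hy]
  exact eq_div_mul_of_eq_mul_div (hρ₀_pos x hx).ne' (hρ₁_pos y hy).ne' (hpmτ_def x hx y hy)

/-- If the backward transition density factors through the reaction
coordinate, then the forward transition density decomposes as
`pτ x y = pτD x (r y) * ρ₁ y`, i.e. the system is decomposable with respect to `r`. -/
theorem backward_factorization_implies_decomposability
    {D d : ℕ}
    (X : Set (EuclideanSpace ℝ (Fin D))) (hX : MeasurableSet X)
    (r : EuclideanSpace ℝ (Fin D) → EuclideanSpace ℝ (Fin d)) (hr : Measurable r)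
    (pτ : EuclideanSpace ℝ (Fin D) → EuclideanSpace ℝ (Fin D) → ℝ)
    (hpτ_nonneg : ∀ x ∈ X, ∀ y ∈ X, 0 ≤ pτ x y)
    (hpτ_norm : ∀ x ∈ X, ∫ y in X, pτ x y = 1)
    (ρ₀ : EuclideanSpace ℝ (Fin D) → ℝ)
    (hρ₀_pos : ∀ x ∈ X, 0 < ρ₀ x)
    (hρ₀_norm : ∫ x in X, ρ₀ x = 1)
    (ρ₁ : EuclideanSpace ℝ (Fin D) → ℝ)
    (hρ₁_def : ∀ y ∈ X, ρ₁ y = ∫ x in X, ρ₀ x * pτ x y)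
    (hρ₁_pos : ∀ y ∈ X, 0 < ρ₁ y)
    (pmτ : EuclideanSpace ℝ (Fin D) → EuclideanSpace ℝ (Fin D) → ℝ)
    (hpmτ_def : ∀ x ∈ X, ∀ y ∈ X, pmτ y x = ρ₀ x * pτ x y / ρ₁ y)
    -- the backward density factors through the reaction coordinate
    (pmτD : EuclideanSpace ℝ (Fin d) → EuclideanSpace ℝ (Fin D) → ℝ)
    (hpmτD_nonneg : ∀ z x, 0 ≤ pmτD z x)
    (hfact : ∀ x ∈ X, ∀ y ∈ X, pmτ y x = pmτD (r y) x) :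
    ∃ pτD : EuclideanSpace ℝ (Fin D) → EuclideanSpace ℝ (Fin d) → ℝ,
      (∀ x z, 0 ≤ pτD x z) ∧
      ∀ x ∈ X, ∀ y ∈ X, pτ x y = pτD x (r y) * ρ₁ y :=
  backward_factorization_implies_decomposability_general X r pτ ρ₀ hρ₀_pos ρ₁ hρ₁_pos pmτ hpmτ_def
    pmτD hpmτD_nonneg hfact
end

section
/- Assume the Markov process with transition density p_τ has a stationary density π (so π(y) = ∫ π(x) p_τ(x,y) dx). If p_τ(x,y) = p_τ^D(x, r(y)) · p_local(r(y), y) for all x,y, then p_τ(x,y) = \tilde{p}_τ^D(x, r(y)) · π(y), where \tilde{p}_τ^D(x, z) = p_τ^D(x,z) / ∫ π(x') p_τ^D(x', z) dx'. That is, the two formulations of decomposability are equivalent in the presence of a stationary distribution. -/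
/-!
Integrating the decomposition `pτ x' y = pτD x' (r y) * plocal (r y) y` against `π x'` and using
stationarity gives `π y = Z (r y) * plocal (r y) y`, where `Z z = ∫ π x' * pτD x' z`. So the local
factor is forced to be `π y / Z (r y)`, and substituting it back gives the second decomposition.
-/

open MeasureTheory

theorem factor_eq_div_setIntegral_of_stationary {α : Type*} [MeasurableSpace α]
    {μ : Measure α} {s : Set α} (hs : MeasurableSet s) {π : α → ℝ} {p : α → α → ℝ}
    {f : α → ℝ} {y : α} {c : ℝ} (hstat : π y = ∫ x in s, π x * p x y ∂μ)
    (hdecomp : ∀ x ∈ s, p x y = f x * c) (hZ : ∫ x in s, π x * f x ∂μ ≠ 0) :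
    c = π y / ∫ x in s, π x * f x ∂μ := by
  have hπy : π y = (∫ x in s, π x * f x ∂μ) * c := by
    rw [hstat, ← integral_mul_const]
    refine setIntegral_congr_fun hs fun x hx => ?_
    rw [hdecomp x hx, mul_assoc]
  rw [eq_div_iff hZ, hπy, mul_comm]

theorem decomposability_stationary_equivalence_general
    {D d : ℕ}
    (X : Set (EuclideanSpace ℝ (Fin D))) (hX : MeasurableSet X)
    (r : EuclideanSpace ℝ (Fin D) → EuclideanSpace ℝ (Fin d))
    (pτ : EuclideanSpace ℝ (Fin D) → EuclideanSpace ℝ (Fin D) → ℝ)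
    -- stationary probability density
    (π : EuclideanSpace ℝ (Fin D) → ℝ)
    (hπ_stat : ∀ y ∈ X, π y = ∫ x in X, π x * pτ x y)
    -- decomposability
    (pτD : EuclideanSpace ℝ (Fin D) → EuclideanSpace ℝ (Fin d) → ℝ)
    (plocal : EuclideanSpace ℝ (Fin d) → EuclideanSpace ℝ (Fin D) → ℝ)
    (hdecomp : ∀ x ∈ X, ∀ y ∈ X, pτ x y = pτD x (r y) * plocal (r y) y)
    -- the normalizing integral is finite and strictly positive on the range of r
    (hpos : ∀ y ∈ X, 0 < ∫ x' in X, π x' * pτD x' (r y)) :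
    ∀ x ∈ X, ∀ y ∈ X,
      pτ x y = (pτD x (r y) / ∫ x' in X, π x' * pτD x' (r y)) * π y := by
  intro x hx y hy
  have hlocal : plocal (r y) y = π y / ∫ x' in X, π x' * pτD x' (r y) :=
    factor_eq_div_setIntegral_of_stationary hX (hπ_stat y hy) (fun x' hx' => hdecomp x' hx' y hy)
      (hpos y hy).ne'
  rw [hdecomp x hx y hy, hlocal]
  ring

/-- In the presence of a stationary density, the two formulations of
decomposability are equivalent: `pτ x y = pτD x (r y) * plocal (r y) y` implies
`pτ x y = (pτD x (r y) / ∫ x', π x' * pτD x' (r y)) * π y`. -/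
theorem decomposability_stationary_equivalence
    {D d : ℕ}
    (X : Set (EuclideanSpace ℝ (Fin D))) (hX : MeasurableSet X)
    (r : EuclideanSpace ℝ (Fin D) → EuclideanSpace ℝ (Fin d)) (hr : Measurable r)
    (pτ : EuclideanSpace ℝ (Fin D) → EuclideanSpace ℝ (Fin D) → ℝ)
    (hpτ_nonneg : ∀ x ∈ X, ∀ y ∈ X, 0 ≤ pτ x y)
    (hpτ_norm : ∀ x ∈ X, ∫ y in X, pτ x y = 1)
    -- stationary probability density
    (π : EuclideanSpace ℝ (Fin D) → ℝ)
    (hπ_pos : ∀ x ∈ X, 0 < π x)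
    (hπ_norm : ∫ x in X, π x = 1)
    (hπ_stat : ∀ y ∈ X, π y = ∫ x in X, π x * pτ x y)
    -- decomposability
    (pτD : EuclideanSpace ℝ (Fin D) → EuclideanSpace ℝ (Fin d) → ℝ)
    (plocal : EuclideanSpace ℝ (Fin d) → EuclideanSpace ℝ (Fin D) → ℝ)
    (hpτD_nonneg : ∀ x z, 0 ≤ pτD x z)
    (hplocal_nonneg : ∀ z y, 0 ≤ plocal z y)
    (hdecomp : ∀ x ∈ X, ∀ y ∈ X, pτ x y = pτD x (r y) * plocal (r y) y)
    -- the normalizing integral is finite and strictly positive on the range of r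
    (hint : ∀ y ∈ X, IntegrableOn (fun x' => π x' * pτD x' (r y)) X)
    (hpos : ∀ y ∈ X, 0 < ∫ x' in X, π x' * pτD x' (r y)) :
    ∀ x ∈ X, ∀ y ∈ X,
      pτ x y = (pτD x (r y) / ∫ x' in X, π x' * pτD x' (r y)) * π y :=
  decomposability_stationary_equivalence_general X hX r pτ π hπ_stat pτD plocal hdecomp hpos
end

section
/- Let (X, Y) be a pair of random variables with joint density ρ(x,y) = ρ₀(x) p_τ(x,y), and define the Koopman operator K_τ f(x) = E[f(Y) | X = x] and the reduced Koopman operator K_L f(x) = E[f(Y) | r(X) = r(x)]. Then K_L = K_τ (as operators on bounded measurable functions, equality ρ₀-almost everywhere) if and only if lumpability holds, i.e., p_τ(x,·) depends on x only through r(x) (for ρ₀-a.e. x). -/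
/-! The joint density identifies the conditional law of `Y` given `X = x` with `pτ(x, y) dy`.
Equality of `E[1_t(Y) | X]` and `E[1_t(Y) | r(X)]` for all measurable `t` says that this
conditional law is, for a.e. `x`, the conditional law of `Y` given `r(X)` evaluated at `r(x)`;
a jointly measurable density of the latter kernel is the lumped density `pτ^L`. Conversely, under
lumpability `E[f(Y) | X] = ∫ f(y) pτ^L(r(X), y) dy` is a function of `r(X)`, so the tower
property makes it equal to `E[f(Y) | r(X)]`. -/

open MeasureTheory ProbabilityTheory
open scoped ENNReal

namespace MeasureTheory

variable {α β : Type*} [MeasurableSpace α] [MeasurableSpace β]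

lemma ae_withDensity_fst_iff_ae_ae {μ : Measure α} {ν : Measure β} [SFinite μ] [SFinite ν]
    {ρ : α → ℝ≥0∞} (hρ : Measurable ρ) {P : α × β → Prop} (hP : MeasurableSet {z | P z}) :
    (∀ᵐ z ∂(μ.prod ν).withDensity (fun z => ρ z.1), P z) ↔
      ∀ᵐ x ∂μ.withDensity ρ, ∀ᵐ y ∂ν, P (x, y) := by
  rw [← prod_withDensity_left hρ, Measure.ae_prod_iff_ae_ae hP]

lemma ae_eq_toReal_of_withDensity_ofReal_eq {ν : Measure β} [SigmaFinite ν] {p : β → ℝ}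
    {q : β → ℝ≥0∞} (hp : Measurable p) (hp_nonneg : ∀ y, 0 ≤ p y) (hq : Measurable q)
    (h : ν.withDensity (fun y => ENNReal.ofReal (p y)) = ν.withDensity q) :
    p =ᵐ[ν] fun y => (q y).toReal := by
  filter_upwards [(withDensity_eq_iff_of_sigmaFinite hp.ennreal_ofReal.aemeasurable
    hq.aemeasurable).mp h] with y hy
  rw [← hy, ENNReal.toReal_ofReal (hp_nonneg y)]

end MeasureTheory

namespace ProbabilityTheory

variable {α β γ Ω : Type*} [MeasurableSpace α] [MeasurableSpace β] [MeasurableSpace γ]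
  [MeasurableSpace Ω]

lemma Kernel.ae_eq_of_forall_ae_apply_eq [MeasurableSpace.CountableOrCountablyGenerated α β]
    {μ : Measure α} [IsFiniteMeasure μ] {κ η : Kernel α β} [IsFiniteKernel κ] [IsFiniteKernel η]
    (h : ∀ t, MeasurableSet t → ∀ᵐ x ∂μ, κ x t = η x t) : κ =ᵐ[μ] η :=
  Kernel.ae_eq_of_compProd_eq <| Measure.ext_prod fun hs ht => by
    rw [Measure.compProd_apply_prod hs ht, Measure.compProd_apply_prod hs ht]
    exact setLIntegral_congr_fun_ae hs ((h _ ht).mono fun x hx _ => hx)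

lemma Kernel.exists_measurable_density [MeasurableSpace.CountableOrCountablyGenerated γ β]
    (κ : Kernel γ β) [IsFiniteKernel κ] (ν : Measure β) [SigmaFinite ν] :
    ∃ q : γ → β → ℝ≥0∞, Measurable (Function.uncurry q) ∧
      ∀ z, κ z ≪ ν → κ z = ν.withDensity (q z) := by
  -- `Kernel.rnDeriv` needs a finite reference kernel: use a finite measure equivalent to `ν`.
  obtain ⟨m, _, hνm, hmν⟩ := exists_isFiniteMeasure_absolutelyContinuous ν
  refine ⟨fun z y => m.rnDeriv ν y * κ.rnDeriv (Kernel.const γ m) z y, ?_, fun z hz => ?_⟩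
  · exact ((Measure.measurable_rnDeriv m ν).comp measurable_snd).mul
      (Kernel.measurable_rnDeriv κ _)
  · have hκz := Kernel.withDensity_rnDeriv_eq (η := Kernel.const γ m) (hz.trans hνm)
    rw [Kernel.withDensity_apply _ (Kernel.measurable_rnDeriv _ _), Kernel.const_apply] at hκz
    change κ z = ν.withDensity (m.rnDeriv ν * κ.rnDeriv (Kernel.const γ m) z)
    rw [MeasureTheory.withDensity_mul _ (Measure.measurable_rnDeriv m ν)
      (Kernel.measurable_rnDeriv_right _ _ z), Measure.withDensity_rnDeriv_eq _ _ hmν, hκz]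

noncomputable def densityKernel (ν : Measure β) [SFinite ν] (p : α → β → ℝ) : Kernel α β :=
  (Kernel.const α ν).withDensity fun x y => ENNReal.ofReal (p x y)

section densityKernel

variable {ν : Measure β} [SFinite ν] {p : α → β → ℝ}

instance : IsSFiniteKernel (densityKernel ν p) :=
  Kernel.IsSFiniteKernel.withDensity _ fun _ _ => ENNReal.ofReal_ne_top

lemma densityKernel_apply (hp : Measurable (Function.uncurry p)) (x : α) :
    densityKernel ν p x = ν.withDensity fun y => ENNReal.ofReal (p x y) := by
  rw [densityKernel, Kernel.withDensity_apply _ hp.ennreal_ofReal, Kernel.const_apply]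

lemma isMarkovKernel_densityKernel (hp : Measurable (Function.uncurry p))
    (hp_nonneg : ∀ x y, 0 ≤ p x y) (hp_norm : ∀ x, ∫ y, p x y ∂ν = 1) :
    IsMarkovKernel (densityKernel ν p) := by
  refine ⟨fun x => ⟨?_⟩⟩
  have hint : Integrable (p x) ν := Integrable.of_integral_ne_zero (by simp [hp_norm x])
  rw [densityKernel_apply hp, withDensity_apply _ MeasurableSet.univ, Measure.restrict_univ,
    ← ofReal_integral_eq_lintegral_ofReal hint (.of_forall (hp_nonneg x)), hp_norm x,
    ENNReal.ofReal_one]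

lemma withDensity_mul_eq_compProd_densityKernel {μ : Measure α} [SFinite μ] {ρ : α → ℝ}
    (hρ : Measurable ρ) (hp : Measurable (Function.uncurry p)) (hp_nonneg : ∀ x y, 0 ≤ p x y) :
    (μ.prod ν).withDensity (fun z => ENNReal.ofReal (ρ z.1 * p z.1 z.2)) =
      μ.withDensity (fun x => ENNReal.ofReal (ρ x)) ⊗ₘ densityKernel ν p := by
  have : IsSFiniteKernel ((Kernel.const α ν).withDensity fun x y => ENNReal.ofReal (p x y)) :=
    inferInstanceAs (IsSFiniteKernel (densityKernel ν p))
  rw [densityKernel, Measure.compProd_withDensity hp.ennreal_ofReal, Measure.compProd_const,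
    prod_withDensity_left hρ.ennreal_ofReal, ← withDensity_mul _ (by fun_prop) (by fun_prop)]
  simp_rw [ENNReal.ofReal_mul' (hp_nonneg _ _)]
  rfl

end densityKernel

section JointDensity

variable {μ : Measure Ω} {X : Ω → α} {Y : Ω → β} {μα : Measure α} [SFinite μα]
  {ν : Measure β} [SFinite ν] {ρ : α → ℝ} {p : α → β → ℝ}

lemma map_eq_withDensity_of_map_prod_eq_withDensity (hY : Measurable Y) (hρ : Measurable ρ)
    (hp : Measurable (Function.uncurry p)) (hp_nonneg : ∀ x y, 0 ≤ p x y)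
    (hp_norm : ∀ x, ∫ y, p x y ∂ν = 1)
    (hlaw : μ.map (fun ω => (X ω, Y ω)) =
      (μα.prod ν).withDensity fun z => ENNReal.ofReal (ρ z.1 * p z.1 z.2)) :
    μ.map X = μα.withDensity fun x => ENNReal.ofReal (ρ x) := by
  have := isMarkovKernel_densityKernel hp hp_nonneg hp_norm
  rw [← Measure.fst_map_prodMk hY, hlaw,
    withDensity_mul_eq_compProd_densityKernel hρ hp hp_nonneg, Measure.fst_compProd]

lemma condDistrib_ae_eq_densityKernel [IsFiniteMeasure μ] [StandardBorelSpace β] [Nonempty β]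
    (hY : Measurable Y) (hρ : Measurable ρ) (hp : Measurable (Function.uncurry p))
    (hp_nonneg : ∀ x y, 0 ≤ p x y) (hp_norm : ∀ x, ∫ y, p x y ∂ν = 1)
    (hlaw : μ.map (fun ω => (X ω, Y ω)) =
      (μα.prod ν).withDensity fun z => ENNReal.ofReal (ρ z.1 * p z.1 z.2)) :
    ∀ᵐ x ∂μ.map X, condDistrib Y X μ x = densityKernel ν p x := by
  have := isMarkovKernel_densityKernel hp hp_nonneg hp_norm
  refine condDistrib_ae_eq_of_measure_eq_compProd X hY.aemeasurable ?_
  rw [map_eq_withDensity_of_map_prod_eq_withDensity hY hρ hp hp_nonneg hp_norm hlaw, hlaw,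
    withDensity_mul_eq_compProd_densityKernel hρ hp hp_nonneg]

end JointDensity

section Lumpability

variable {μ : Measure Ω} [IsFiniteMeasure μ] [StandardBorelSpace β] [Nonempty β]
  {X : Ω → α} {Y : Ω → β} {g : α → γ}

lemma condDistrib_ae_eq_comp_of_condExp_indicator_eq (hX : Measurable X) (hY : Measurable Y)
    (hg : Measurable g)
    (h : ∀ t, MeasurableSet t →
      μ⟦Y ⁻¹' t | MeasurableSpace.comap X inferInstance⟧ =ᵐ[μ]
        μ⟦Y ⁻¹' t | MeasurableSpace.comap (fun ω => g (X ω)) inferInstance⟧) :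
    ∀ᵐ x ∂μ.map X, condDistrib Y X μ x = condDistrib Y (fun ω => g (X ω)) μ (g x) := by
  refine Kernel.ae_eq_of_forall_ae_apply_eq
    (η := (condDistrib Y (fun ω => g (X ω)) μ).comap g hg) fun t ht => ?_
  have hgX : Measurable fun ω => g (X ω) := hg.comp hX
  have hreal : ∀ᵐ ω ∂μ, (condDistrib Y X μ (X ω)).real t =
      (condDistrib Y (fun ω => g (X ω)) μ (g (X ω))).real t :=
    (condDistrib_ae_eq_condExp hX hY ht).trans
      ((h t ht).trans (condDistrib_ae_eq_condExp hgX hY ht).symm)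
  rw [ae_map_iff hX.aemeasurable (measurableSet_eq_fun (Kernel.measurable_coe _ ht)
    (Kernel.measurable_coe _ ht))]
  filter_upwards [hreal] with ω hω
  exact (measureReal_eq_measureReal_iff (measure_ne_top _ _) (measure_ne_top _ _)).mp hω

lemma condExp_ae_eq_condExp_comp_of_condDistrib_ae_eq_comp (hX : Measurable X)
    (hY : Measurable Y) (hg : Measurable g) {κ : Kernel γ β}
    (hκ : ∀ᵐ x ∂μ.map X, condDistrib Y X μ x = κ (g x)) {f : β → ℝ} (hf : StronglyMeasurable f)
    (hfY : Integrable (fun ω => f (Y ω)) μ) :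
    μ[fun ω => f (Y ω) | MeasurableSpace.comap X inferInstance] =ᵐ[μ]
      μ[fun ω => f (Y ω) | MeasurableSpace.comap (fun ω => g (X ω)) inferInstance] := by
  set F := fun ω => ∫ y, f y ∂κ (g (X ω))
  have hF : μ[fun ω => f (Y ω) | MeasurableSpace.comap X inferInstance] =ᵐ[μ] F := by
    filter_upwards [condExp_ae_eq_integral_condDistrib hX hY.aemeasurable hf hfY,
      ae_of_ae_map hX.aemeasurable hκ] with ω h1 h2
    rw [h1, h2]
  have hF_meas : StronglyMeasurable[MeasurableSpace.comap (fun ω => g (X ω)) inferInstance] F :=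
    hf.integral_kernel.comp_measurable (comap_measurable _)
  have hle : MeasurableSpace.comap (fun ω => g (X ω)) inferInstance ≤
      MeasurableSpace.comap X inferInstance :=
    (hg.comp (comap_measurable X)).comap_le
  calc μ[fun ω => f (Y ω) | MeasurableSpace.comap X inferInstance]
      =ᵐ[μ] F := hF
    _ = μ[F | MeasurableSpace.comap (fun ω => g (X ω)) inferInstance] :=
      (condExp_of_stronglyMeasurable (hle.trans hX.comap_le) hF_meas
        (integrable_condExp.congr hF)).symm
    _ =ᵐ[μ] μ[μ[fun ω => f (Y ω) | MeasurableSpace.comap X inferInstance] |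
        MeasurableSpace.comap (fun ω => g (X ω)) inferInstance] := condExp_congr_ae hF.symm
    _ =ᵐ[μ] μ[fun ω => f (Y ω) | MeasurableSpace.comap (fun ω => g (X ω)) inferInstance] :=
      condExp_condExp_of_le hle hX.comap_le

end Lumpability

end ProbabilityTheory

theorem reduced_koopman_eq_iff_lumpable_general
    {D d : ℕ}
    {Ω : Type*} [MeasurableSpace Ω] (μ : Measure Ω) [IsProbabilityMeasure μ]
    (Xv Yv : Ω → EuclideanSpace ℝ (Fin D))
    (hXv : Measurable Xv) (hYv : Measurable Yv)
    (r : EuclideanSpace ℝ (Fin D) → EuclideanSpace ℝ (Fin d)) (hr : Measurable r)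
    (pτ : EuclideanSpace ℝ (Fin D) → EuclideanSpace ℝ (Fin D) → ℝ)
    (hpτ_meas : Measurable (Function.uncurry pτ))
    (hpτ_nonneg : ∀ x y, 0 ≤ pτ x y)
    (hpτ_norm : ∀ x, ∫ y, pτ x y = 1)
    (ρ₀ : EuclideanSpace ℝ (Fin D) → ℝ)
    (hρ₀_meas : Measurable ρ₀)
    -- the joint law of (X, Y) has density ρ(x,y) = ρ₀(x) pτ(x,y)
    (hlaw : Measure.map (fun ω => (Xv ω, Yv ω)) μ =
      (volume : Measure (EuclideanSpace ℝ (Fin D) × EuclideanSpace ℝ (Fin D))).withDensity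
        (fun p => ENNReal.ofReal (ρ₀ p.1 * pτ p.1 p.2))) :
    (∀ f : EuclideanSpace ℝ (Fin D) → ℝ, Measurable f → (∃ C, ∀ y, |f y| ≤ C) →
        μ[(fun ω => f (Yv ω)) | MeasurableSpace.comap Xv inferInstance]
          =ᵐ[μ] μ[(fun ω => f (Yv ω)) | MeasurableSpace.comap (fun ω => r (Xv ω)) inferInstance])
      ↔
    (∃ pτL : EuclideanSpace ℝ (Fin d) → EuclideanSpace ℝ (Fin D) → ℝ,
      Measurable (Function.uncurry pτL) ∧ (∀ z y, 0 ≤ pτL z y) ∧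
      ∀ᵐ p ∂((volume : Measure (EuclideanSpace ℝ (Fin D) × EuclideanSpace ℝ (Fin D))).withDensity
          (fun p => ENNReal.ofReal (ρ₀ p.1))),
        pτ p.1 p.2 = pτL (r p.1) p.2) := by
  rw [Measure.volume_eq_prod] at hlaw ⊢
  have hX := map_eq_withDensity_of_map_prod_eq_withDensity hYv hρ₀_meas hpτ_meas hpτ_nonneg
    hpτ_norm hlaw
  have hcond := condDistrib_ae_eq_densityKernel hYv hρ₀_meas hpτ_meas hpτ_nonneg hpτ_norm hlaw
  have hlump : ∀ q : EuclideanSpace ℝ (Fin d) → EuclideanSpace ℝ (Fin D) → ℝ,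
      Measurable (Function.uncurry q) →
        ((∀ᵐ p ∂(volume.prod volume).withDensity (fun p => ENNReal.ofReal (ρ₀ p.1)),
            pτ p.1 p.2 = q (r p.1) p.2) ↔
          ∀ᵐ x ∂μ.map Xv, ∀ᵐ y, pτ x y = q (r x) y) := fun q hq => by
    rw [hX]
    exact ae_withDensity_fst_iff_ae_ae hρ₀_meas.ennreal_ofReal
      (measurableSet_eq_fun hpτ_meas (hq.comp ((hr.comp measurable_fst).prodMk measurable_snd)))
  constructor
  · intro h
    have hκ := condDistrib_ae_eq_comp_of_condExp_indicator_eq hXv hYv hr fun t ht =>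
      h _ (measurable_const.indicator ht) ⟨1, fun y => by
        by_cases hy : y ∈ t <;> simp [hy]⟩
    obtain ⟨q, hq_meas, hq⟩ :=
      Kernel.exists_measurable_density (condDistrib Yv (fun ω => r (Xv ω)) μ) volume
    have hqL : Measurable (Function.uncurry fun z y => (q z y).toReal) := hq_meas.ennreal_toReal
    refine ⟨fun z y => (q z y).toReal, hqL, fun _ _ => ENNReal.toReal_nonneg,
      (hlump _ hqL).mpr ?_⟩
    filter_upwards [hκ, hcond] with x hκx hτx
    rw [hτx, densityKernel_apply hpτ_meas] at hκx
    refine ae_eq_toReal_of_withDensity_ofReal_eq (hpτ_meas.comp measurable_prodMk_left)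
      (hpτ_nonneg x) (hq_meas.comp measurable_prodMk_left) ?_
    rw [hκx, hq _ (hκx ▸ withDensity_absolutelyContinuous _ _)]
  · rintro ⟨pτL, hpτL_meas, -, hpτL⟩ f hf ⟨C, hC⟩
    refine condExp_ae_eq_condExp_comp_of_condDistrib_ae_eq_comp hXv hYv hr
      (κ := densityKernel volume pτL) ?_ hf.stronglyMeasurable
      (.of_bound (hf.comp hYv).aestronglyMeasurable C (.of_forall fun ω => hC (Yv ω)))
    filter_upwards [hcond, (hlump pτL hpτL_meas).mp hpτL] with x hτx hx
    rw [hτx, densityKernel_apply hpτ_meas, densityKernel_apply hpτL_meas]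
    exact withDensity_congr_ae (hx.mono fun y hy => congrArg ENNReal.ofReal hy)

/-- The reduced Koopman operator agrees with the full Koopman operator
(`E[f(Y)|X] = E[f(Y)|r(X)]` a.e., for all bounded measurable `f`) if and only if
lumpability holds, i.e. `pτ(x,·)` depends on `x` only through `r x`,
`(ρ₀ ⊗ λ)`-almost everywhere. -/
theorem reduced_koopman_eq_iff_lumpable
    {D d : ℕ}
    {Ω : Type*} [MeasurableSpace Ω] (μ : Measure Ω) [IsProbabilityMeasure μ]
    (Xv Yv : Ω → EuclideanSpace ℝ (Fin D))
    (hXv : Measurable Xv) (hYv : Measurable Yv)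
    (r : EuclideanSpace ℝ (Fin D) → EuclideanSpace ℝ (Fin d)) (hr : Measurable r)
    (pτ : EuclideanSpace ℝ (Fin D) → EuclideanSpace ℝ (Fin D) → ℝ)
    (hpτ_meas : Measurable (Function.uncurry pτ))
    (hpτ_nonneg : ∀ x y, 0 ≤ pτ x y)
    (hpτ_norm : ∀ x, ∫ y, pτ x y = 1)
    (ρ₀ : EuclideanSpace ℝ (Fin D) → ℝ)
    (hρ₀_meas : Measurable ρ₀)
    (hρ₀_pos : ∀ x, 0 < ρ₀ x)
    (hρ₀_norm : ∫ x, ρ₀ x = 1)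
    -- the joint law of (X, Y) has density ρ(x,y) = ρ₀(x) pτ(x,y)
    (hlaw : Measure.map (fun ω => (Xv ω, Yv ω)) μ =
      (volume : Measure (EuclideanSpace ℝ (Fin D) × EuclideanSpace ℝ (Fin D))).withDensity
        (fun p => ENNReal.ofReal (ρ₀ p.1 * pτ p.1 p.2))) :
    (∀ f : EuclideanSpace ℝ (Fin D) → ℝ, Measurable f → (∃ C, ∀ y, |f y| ≤ C) →
        μ[(fun ω => f (Yv ω)) | MeasurableSpace.comap Xv inferInstance]
          =ᵐ[μ] μ[(fun ω => f (Yv ω)) | MeasurableSpace.comap (fun ω => r (Xv ω)) inferInstance])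
      ↔
    (∃ pτL : EuclideanSpace ℝ (Fin d) → EuclideanSpace ℝ (Fin D) → ℝ,
      Measurable (Function.uncurry pτL) ∧ (∀ z y, 0 ≤ pτL z y) ∧
      ∀ᵐ p ∂((volume : Measure (EuclideanSpace ℝ (Fin D) × EuclideanSpace ℝ (Fin D))).withDensity
          (fun p => ENNReal.ofReal (ρ₀ p.1))),
        pτ p.1 p.2 = pτL (r p.1) p.2) :=
  reduced_koopman_eq_iff_lumpable_general μ Xv Yv hXv hYv r hr pτ hpτ_meas hpτ_nonneg hpτ_norm ρ₀
    hρ₀_meas hlaw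
end

section
/- For the linear interpolation path Y^s = (1-s)Y⁰ + sY¹ with velocity field v*(s,y) = E[Y¹ - Y⁰ | Y^s = y], the marginal densities p_s of Y^s satisfy the continuity equation ∂_s p_s + ∇·(p_s v*(s,·)) = 0 in the weak sense: for every compactly supported smooth test function φ, d/ds E[φ(Y^s)] = E[∇φ(Y^s) · v*(s, Y^s)] = E[∇φ(Y^s) · (Y¹ - Y⁰)]. -/
open MeasureTheory
open scoped RealInnerProductSpace

lemma condexp_clm_aux {α : Type*} {m m0 : MeasurableSpace α} {μ : Measure α}
    {E F : Type*} [NormedAddCommGroup E] [NormedSpace ℝ E] [CompleteSpace E]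
    [NormedAddCommGroup F] [NormedSpace ℝ F] [CompleteSpace F]
    (hm : m ≤ m0) [SigmaFinite (μ.trim hm)] (T : E →L[ℝ] F)
    {f : α → E} (hf : Integrable f μ) :
    (fun ω => T ((μ[f|m]) ω)) =ᵐ[μ] μ[fun ω => T (f ω)|m] := by
  refine ae_eq_condExp_of_forall_setIntegral_eq hm (T.integrable_comp hf) ?_ ?_ ?_
  · intro s _ _
    exact (T.integrable_comp integrable_condExp).integrableOn
  · intro s hs hμs
    rw [T.integral_comp_comm integrable_condExp.integrableOn,
        T.integral_comp_comm hf.integrableOn, setIntegral_condExp hm hf hs]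
  · exact ⟨fun ω => T ((μ[f|m]) ω),
      T.continuous.comp_stronglyMeasurable stronglyMeasurable_condExp,
      Filter.EventuallyEq.rfl⟩


lemma coord_le_norm_aux {D : ℕ} (x : EuclideanSpace ℝ (Fin D)) (i : Fin D) :
    ‖x i‖ ≤ ‖x‖ := by
  rw [EuclideanSpace.norm_eq]
  rw [show ‖x i‖ = Real.sqrt (‖x i‖ ^ 2) from (Real.sqrt_sq (norm_nonneg _)).symm]
  exact Real.sqrt_le_sqrt
    (Finset.single_le_sum (fun j _ => sq_nonneg ‖x j‖) (Finset.mem_univ i))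

lemma proj_eq_aux {D : ℕ} (i : Fin D) (x : EuclideanSpace ℝ (Fin D)) :
    EuclideanSpace.proj (𝕜 := ℝ) i x = x i := rfl

set_option maxHeartbeats 1000000 in
/-- For the linear interpolation `Yˢ = (1-s)Y⁰ + sY¹`, the marginals
satisfy the continuity equation with the velocity field `v*(s,y) = E[Y¹ - Y⁰ | Yˢ = y]`
in the weak sense: for every compactly supported smooth `φ`,
`d/ds E[φ(Yˢ)] = E[⟪∇φ(Yˢ), Y¹ - Y⁰⟫] = E[⟪∇φ(Yˢ), v*(s, Yˢ)⟫]`. -/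
theorem interpolation_continuity_equation_weak
    {D : ℕ}
    {Ω : Type*} [MeasurableSpace Ω] (μ : Measure Ω) [IsProbabilityMeasure μ]
    (Y0 Y1 : Ω → EuclideanSpace ℝ (Fin D))
    (hY0 : Measurable Y0) (hY1 : Measurable Y1)
    (hY0_int : Integrable Y0 μ) (hY1_int : Integrable Y1 μ)
    (φ : EuclideanSpace ℝ (Fin D) → ℝ)
    (hφ : ContDiff ℝ (⊤ : ℕ∞) φ) (hφc : HasCompactSupport φ) :
    ∀ s : ℝ,
      HasDerivAt (fun t : ℝ => ∫ ω, φ ((1 - t) • Y0 ω + t • Y1 ω) ∂μ)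
        (∫ ω, ⟪gradient φ ((1 - s) • Y0 ω + s • Y1 ω), Y1 ω - Y0 ω⟫ ∂μ) s
      ∧
      (∫ ω, ⟪gradient φ ((1 - s) • Y0 ω + s • Y1 ω),
          (μ[(fun ω => Y1 ω - Y0 ω) |
            MeasurableSpace.comap (fun ω => (1 - s) • Y0 ω + s • Y1 ω) inferInstance]) ω⟫ ∂μ)
        = ∫ ω, ⟪gradient φ ((1 - s) • Y0 ω + s • Y1 ω), Y1 ω - Y0 ω⟫ ∂μ := by
  intro s
  have hφd : Differentiable ℝ φ := hφ.differentiable (by simp)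
  have hfc : Continuous (fderiv ℝ φ) := hφ.continuous_fderiv (by simp)
  have hgradc : Continuous (gradient φ) := by
    have : Continuous fun y : EuclideanSpace ℝ (Fin D) => (InnerProductSpace.toDual ℝ (EuclideanSpace ℝ (Fin D))).symm (fderiv ℝ φ y) :=
      (InnerProductSpace.toDual ℝ (EuclideanSpace ℝ (Fin D))).symm.continuous.comp hfc
    exact this
  obtain ⟨C, hC⟩ := (hφc.fderiv ℝ).exists_bound_of_continuous hfc
  have hgradb : ∀ y, ‖gradient φ y‖ ≤ C := by
    intro y
    have : ‖gradient φ y‖ = ‖fderiv ℝ φ y‖ :=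
      ((InnerProductSpace.toDual ℝ (EuclideanSpace ℝ (Fin D))).symm.norm_map _)
    rw [this]; exact hC y
  have hinner : ∀ (y v : EuclideanSpace ℝ (Fin D)), ⟪gradient φ y, v⟫ = fderiv ℝ φ y v := fun y v =>
    InnerProductSpace.toDual_symm_apply
  -- the path and its derivative
  have hpath : ∀ (t : ℝ) (ω : Ω),
      HasDerivAt (fun t : ℝ => (1 - t) • Y0 ω + t • Y1 ω) (Y1 ω - Y0 ω) t := by
    intro t ω
    have heq : (fun t : ℝ => (1 - t) • Y0 ω + t • Y1 ω)
        = fun t : ℝ => Y0 ω + t • (Y1 ω - Y0 ω) := by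
      funext u; module
    rw [heq]
    simpa using ((hasDerivAt_id t).smul_const (Y1 ω - Y0 ω)).const_add (Y0 ω)
  have hderiv : ∀ (t : ℝ) (ω : Ω),
      HasDerivAt (fun t : ℝ => φ ((1 - t) • Y0 ω + t • Y1 ω))
        ⟪gradient φ ((1 - t) • Y0 ω + t • Y1 ω), Y1 ω - Y0 ω⟫ t := by
    intro t ω
    rw [hinner]
    exact (hφd _).hasFDerivAt.comp_hasDerivAt t (hpath t ω)
  have hYt : ∀ t : ℝ, Measurable fun ω => (1 - t) • Y0 ω + t • Y1 ω := fun t =>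
    (hY0.const_smul (1 - t)).add (hY1.const_smul t)
  have hd_int : Integrable (fun ω => Y1 ω - Y0 ω) μ := hY1_int.sub hY0_int
  have hF'meas : ∀ t : ℝ, AEStronglyMeasurable
      (fun ω => ⟪gradient φ ((1 - t) • Y0 ω + t • Y1 ω), Y1 ω - Y0 ω⟫) μ := by
    intro t
    exact ((hgradc.measurable.comp (hYt t)).inner (hY1.sub hY0)).aestronglyMeasurable
  -- Part 1: differentiation under the integral sign
  have part1 : HasDerivAt (fun t : ℝ => ∫ ω, φ ((1 - t) • Y0 ω + t • Y1 ω) ∂μ)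
      (∫ ω, ⟪gradient φ ((1 - s) • Y0 ω + s • Y1 ω), Y1 ω - Y0 ω⟫ ∂μ) s := by
    obtain ⟨Cφ, hCφ⟩ := hφc.exists_bound_of_continuous hφ.continuous
    have := hasDerivAt_integral_of_dominated_loc_of_deriv_le (F := fun t ω =>
        φ ((1 - t) • Y0 ω + t • Y1 ω))
      (F' := fun t ω => ⟪gradient φ ((1 - t) • Y0 ω + t • Y1 ω), Y1 ω - Y0 ω⟫)
      (bound := fun ω => C * ‖Y1 ω - Y0 ω‖) (x₀ := s) (s := Metric.ball s 1) (Metric.ball_mem_nhds s one_pos)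
      (Filter.Eventually.of_forall fun t =>
        (hφ.continuous.measurable.comp (hYt t)).aestronglyMeasurable)
      ?_ (hF'meas s) ?_ (hd_int.norm.const_mul C) ?_
    · exact this.2
    · exact ⟨(hφ.continuous.measurable.comp (hYt s)).aestronglyMeasurable,
        (hasFiniteIntegral_const Cφ).mono'
          (Filter.Eventually.of_forall fun ω => hCφ _)⟩
    · refine Filter.Eventually.of_forall fun ω => fun t _ => ?_
      calc ‖⟪gradient φ ((1 - t) • Y0 ω + t • Y1 ω), Y1 ω - Y0 ω⟫‖
          ≤ ‖gradient φ ((1 - t) • Y0 ω + t • Y1 ω)‖ * ‖Y1 ω - Y0 ω‖ := norm_inner_le_norm _ _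
        _ ≤ C * ‖Y1 ω - Y0 ω‖ :=
            mul_le_mul_of_nonneg_right (hgradb _) (norm_nonneg _)
    · exact Filter.Eventually.of_forall fun ω => fun t _ => hderiv t ω
  refine ⟨part1, ?_⟩
  -- Part 2: tower property
  set Ys : Ω → EuclideanSpace ℝ (Fin D) := fun ω => (1 - s) • Y0 ω + s • Y1 ω with hYs_def
  set m : MeasurableSpace Ω := MeasurableSpace.comap Ys inferInstance with hm_def
  have hm : m ≤ _ := (hYt s).comap_le
  haveI : SigmaFinite (μ.trim hm) := inferInstance
  set g : Ω → EuclideanSpace ℝ (Fin D) := fun ω => gradient φ (Ys ω) with hg_def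
  have hYs_m : Measurable[m] Ys := Measurable.of_comap_le le_rfl
  have hg_m : StronglyMeasurable[m] g :=
    (hgradc.measurable.comp hYs_m).stronglyMeasurable
  have hg_meas : AEStronglyMeasurable g μ :=
    hg_m.aestronglyMeasurable
  set f : Ω → EuclideanSpace ℝ (Fin D) := fun ω => Y1 ω - Y0 ω with hf_def
  have key : ∀ i : Fin D, ∫ ω, g ω i * (μ[f|m]) ω i ∂μ = ∫ ω, g ω i * f ω i ∂μ := by
    intro i
    have hproj : (fun ω => (μ[f|m]) ω i) =ᵐ[μ] μ[fun ω => f ω i|m] := by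
      have := condexp_clm_aux hm (EuclideanSpace.proj (𝕜 := ℝ) i) hd_int
      simpa [proj_eq_aux] using this
    have hfi_int : Integrable (fun ω => f ω i) μ := by
      have := (EuclideanSpace.proj (𝕜 := ℝ) i).integrable_comp hd_int
      simpa [proj_eq_aux] using this
    have hgi_m : StronglyMeasurable[m] fun ω => g ω i := by
      have := (EuclideanSpace.proj (𝕜 := ℝ) i).continuous.comp_stronglyMeasurable hg_m
      simpa [proj_eq_aux] using this
    have hbdd : ∃ c, ∀ ω, ‖g ω i‖ ≤ c :=
      ⟨C, fun ω => le_trans (coord_le_norm_aux (g ω) i) (hgradb _)⟩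
    have hprod_int : Integrable (fun ω => g ω i * f ω i) μ :=
      hfi_int.bdd_mul (hgi_m.mono hm).aestronglyMeasurable (Filter.Eventually.of_forall hbdd.choose_spec)
    calc ∫ ω, g ω i * (μ[f|m]) ω i ∂μ
        = ∫ ω, g ω i * (μ[fun ω => f ω i|m]) ω ∂μ := by
          refine integral_congr_ae ?_
          filter_upwards [hproj] with ω hω
          rw [hω]
      _ = ∫ ω, (μ[(fun ω => g ω i) * fun ω => f ω i|m]) ω ∂μ := by
          refine integral_congr_ae ?_
          exact (condExp_mul_of_stronglyMeasurable_left hgi_m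
            hprod_int hfi_int).symm
      _ = ∫ ω, g ω i * f ω i ∂μ := by
          simpa [Pi.mul_apply] using integral_condExp hm (μ := μ)
            (f := (fun ω => g ω i) * fun ω => f ω i)
  -- now sum over coordinates
  have hcond_int : Integrable (μ[f|m]) μ := integrable_condExp
  have expand : ∀ (h : Ω → EuclideanSpace ℝ (Fin D)), Integrable h μ →
      ∫ ω, ⟪g ω, h ω⟫ ∂μ = ∑ i, ∫ ω, g ω i * h ω i ∂μ := by
    intro h hh
    have : ∀ ω, ⟪g ω, h ω⟫ = ∑ i, g ω i * h ω i := by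
      intro ω
      simp [PiLp.inner_apply, RCLike.inner_apply, conj_trivial]
      exact Finset.sum_congr rfl fun _ _ => mul_comm _ _
    simp_rw [this]
    refine integral_finset_sum _ fun i _ => ?_
    have hbdd : ∃ c, ∀ ω, ‖g ω i‖ ≤ c :=
      ⟨C, fun ω => le_trans (coord_le_norm_aux (g ω) i) (hgradb _)⟩
    have hhi : Integrable (fun ω => h ω i) μ := by
      have := (EuclideanSpace.proj (𝕜 := ℝ) i).integrable_comp hh
      simpa [proj_eq_aux] using this
    have hgi : StronglyMeasurable[m] fun ω => g ω i := by
      have := (EuclideanSpace.proj (𝕜 := ℝ) i).continuous.comp_stronglyMeasurable hg_m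
      simpa [proj_eq_aux] using this
    exact hhi.bdd_mul (hgi.mono hm).aestronglyMeasurable (Filter.Eventually.of_forall hbdd.choose_spec)
  rw [expand _ hcond_int, expand _ hd_int]
  exact Finset.sum_congr rfl fun i _ => key i
end
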